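/- arXiv:2511.07462 — 2 statements merged into one kernel-verified Lean document; each statement's English description precedes it below -/
import Mathlib

section
/- For every positive integer m, every real number a, and every natural number n, the Bernoulli polynomial evaluated at -a/m satisfies the explicit formula B_n(-a/m) = Σ_{k=0}^{n} k! · W̃_{m,a}(n,k) · (-1)^k / (m^{n-k} · (k+1)). -/
open Finset

/-- Noncentral Whitney numbers of the second kind:
`W̃_{m,a}(n,k) = (1/(m^k k!)) Σ_{j=0}^{k} (-1)^{k-j} C(k,j) (m j - a)^n`. -/
noncomputable def ncWhitney (m : ℕ) (a : ℝ) (n k : ℕ) : ℝ :=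
  (1 / ((m : ℝ) ^ k * (Nat.factorial k : ℝ))) *
    ∑ j ∈ Finset.range (k + 1),
      (-1 : ℝ) ^ (k - j) * (Nat.choose k j : ℝ) * ((m : ℝ) * (j : ℝ) - a) ^ n

/-- Noncentral Tanny-Dowling polynomials:
`F̃_{m,a}(n;x) = Σ_{k=0}^{n} k! W̃_{m,a}(n,k) x^k`. -/
noncomputable def ncTannyDowling (m : ℕ) (a : ℝ) (n : ℕ) (x : ℝ) : ℝ :=
  ∑ k ∈ Finset.range (n + 1), (Nat.factorial k : ℝ) * ncWhitney m a n k * x ^ k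

/-- Noncentral Dowling polynomials:
`D̃_{m,a}(n;x) = Σ_{k=0}^{n} W̃_{m,a}(n,k) x^k`. -/
noncomputable def ncDowling (m : ℕ) (a : ℝ) (n : ℕ) (x : ℝ) : ℝ :=
  ∑ k ∈ Finset.range (n + 1), ncWhitney m a n k * x ^ k

/-!
With `x = -a/m`, the number `k! m^k W̃_{m,a}(n,k)` is the `k`-th forward difference with
step `m` of `t ↦ t^n` at `-a`, i.e. `m^n Δ^k[t^n](x)`, so the right-hand side is the truncated
Newton series `Σ_k (-1)^k/(k+1) Δ^k[t^n](x)` of `B_n(x) = (log(1+Δ)/Δ) x^n`. At `x = 0` this is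
checked against the recurrence `Σ_{i ≤ N} C(N+1,i) B_i = 0^N`, and the general case follows by
expanding `(x+t)^n`.
-/

open scoped fwdDiff Nat

/-- A truncation of `(1 + Δ)⁻¹ = Σ (-Δ)^k`. -/
theorem sum_range_neg_one_pow_smul_fwdDiff_iter_add {M G : Type*} [AddCommMonoid M]
    [AddCommGroup G] (h : M) (f : M → G) (K : ℕ) (y : M) :
    ∑ k ∈ range K, (-1 : ℤ) ^ k • Δ_[h] ^[k] f (y + h) =
      f y - (-1 : ℤ) ^ K • Δ_[h] ^[K] f y := by
  have hshift (k : ℕ) : Δ_[h] ^[k] f (y + h) = Δ_[h] ^[k] f y + Δ_[h] ^[k + 1] f y := by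
    rw [Function.iterate_succ_apply', fwdDiff]; abel
  have htelescope := sum_range_sub' (fun k ↦ (-1 : ℤ) ^ k • Δ_[h] ^[k] f y) K
  simp only [Function.iterate_zero, id_eq, pow_zero, one_smul] at htelescope
  rw [← htelescope]
  refine sum_congr rfl fun k _ ↦ ?_
  rw [hshift, pow_succ, mul_neg_one, neg_smul, sub_neg_eq_add, smul_add]

section CommRing

variable {R : Type*} [CommRing R]

theorem fwdDiff_iter_const_mul {M : Type*} [AddCommMonoid M] (h : M) (c : R) (f : M → R)
    (k : ℕ) (y : M) : Δ_[h] ^[k] (fun r ↦ c * f r) y = c * Δ_[h] ^[k] f y :=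
  congr_fun (fwdDiff_iter_const_smul h c f k) y

theorem fwdDiff_iter_apply_mul {G : Type*} [AddCommGroup G] (f : R → G) (c y : R) (k : ℕ) :
    Δ_[c] ^[k] f (c * y) = Δ_[1] ^[k] (fun r ↦ f (c * r)) y := by
  simp only [fwdDiff_iter_eq_sum_shift, nsmul_eq_mul, mul_one, mul_comm c, add_mul]

theorem fwdDiff_iter_succ_mul_self_apply_zero (f : R → R) (k : ℕ) :
    Δ_[1] ^[k + 1] (fun r ↦ r * f r) 0 = (k + 1) * Δ_[1] ^[k] f 1 := by
  rw [fwdDiff_iter_eq_sum_shift, fwdDiff_iter_eq_sum_shift, sum_range_succ', mul_sum]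
  simp only [zero_add, nsmul_eq_mul, mul_one, Nat.cast_zero, zero_mul, smul_zero, add_zero,
    zsmul_eq_mul]
  refine sum_congr rfl fun j _ ↦ ?_
  have hchoose : ((k + 1).choose (j + 1) : R) * (j + 1) = (k + 1) * k.choose j := by
    exact_mod_cast congrArg (Nat.cast (R := R)) (Nat.add_one_mul_choose_eq k j).symm
  rw [Nat.add_sub_add_right, add_comm (1 : R)]
  push_cast
  linear_combination (-1 : R) ^ (k - j) * f (j + 1) * hchoose

theorem fwdDiff_pow (n : ℕ) :
    Δ_[1] (fun r : R ↦ r ^ n) = fun r ↦ ∑ i ∈ range n, (n.choose i : R) * r ^ i := by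
  ext r
  simp [fwdDiff, add_pow, sum_range_succ, mul_comm]

theorem fwdDiff_iter_sum_mul_pow (s : Finset ℕ) (P : ℕ → R) (k : ℕ) (y : R) :
    Δ_[1] ^[k] (fun r ↦ ∑ i ∈ s, P i * r ^ i) y =
      ∑ i ∈ s, P i * Δ_[1] ^[k] (fun r ↦ r ^ i) y := by
  rw [← sum_fn, fwdDiff_iter_finsetSum, Finset.sum_apply]
  exact sum_congr rfl fun i _ ↦ fwdDiff_iter_const_mul _ _ _ _ _

theorem fwdDiff_iter_pow_eq_sum_choose (n k : ℕ) (x : R) :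
    Δ_[1] ^[k] (fun r ↦ r ^ n) x =
      ∑ i ∈ range (n + 1), (n.choose i * x ^ (n - i)) * Δ_[1] ^[k] (fun r ↦ r ^ i) 0 := by
  rw [← zero_add x, ← fwdDiff_iter_comp_add, zero_add, ← fwdDiff_iter_sum_mul_pow]
  refine congrArg (fun f ↦ Δ_[1] ^[k] f 0) (funext fun r ↦ ?_)
  rw [add_pow]
  exact sum_congr rfl fun i _ ↦ by ring

theorem sum_range_mul_fwdDiff_iter_pow_of_lt (c : ℕ → R) {n N : ℕ} (hn : n < N) (x : R) :
    ∑ k ∈ range N, c k * Δ_[1] ^[k] (fun r ↦ r ^ n) x =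
      ∑ k ∈ range (n + 1), c k * Δ_[1] ^[k] (fun r ↦ r ^ n) x := by
  refine (sum_subset (range_subset_range.2 hn) fun k _ hk ↦ ?_).symm
  rw [fwdDiff_iter_pow_eq_zero_of_lt (by simpa using hk), Pi.zero_apply, mul_zero]

end CommRing

section CharZeroField

variable {K : Type*} [Field K] [CharZero K]

theorem eq_of_sum_range_choose_mul_eq {s t : ℕ → K}
    (h : ∀ N, ∑ i ∈ range (N + 1), ((N + 1).choose i : K) * s i =
      ∑ i ∈ range (N + 1), ((N + 1).choose i : K) * t i) : s = t := by
  funext n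
  induction n using Nat.strong_induction_on with
  | _ n ih =>
    have hn := h n
    rw [sum_range_succ, sum_range_succ, sum_congr rfl fun i hi ↦ by rw [ih i (mem_range.1 hi)],
      add_right_inj, Nat.choose_succ_self_right] at hn
    exact mul_left_cancel₀ (Nat.cast_ne_zero.2 n.succ_ne_zero) hn

theorem sum_range_choose_mul_sum_fwdDiff_iter_pow (N : ℕ) :
    ∑ i ∈ range (N + 1), ((N + 1).choose i : K) *
      ∑ k ∈ range (i + 1), (-1) ^ k / (k + 1) * Δ_[1] ^[k] (fun r : K ↦ r ^ i) 0 =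
        0 ^ N := by
  -- `Σ C(N+1,i) r^i = Δ[r^(N+1)]`, and `Δ^(k+1)[r · r^N](0) = (k+1) Δ^k[r^N](1)`.
  calc _ = ∑ i ∈ range (N + 1), ((N + 1).choose i : K) *
        ∑ k ∈ range (N + 1), (-1) ^ k / (k + 1) * Δ_[1] ^[k] (fun r : K ↦ r ^ i) 0 :=
        sum_congr rfl fun i hi ↦ by rw [sum_range_mul_fwdDiff_iter_pow_of_lt _ (mem_range.1 hi)]
    _ = ∑ k ∈ range (N + 1), (-1) ^ k / (k + 1) *
        Δ_[1] ^[k + 1] (fun r : K ↦ r ^ (N + 1)) 0 := by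
        simp_rw [Function.iterate_succ_apply, fwdDiff_pow, fwdDiff_iter_sum_mul_pow, mul_sum]
        rw [sum_comm]
        exact sum_congr rfl fun k _ ↦ sum_congr rfl fun i _ ↦ by ring
    _ = ∑ k ∈ range (N + 1), (-1 : ℤ) ^ k • Δ_[1] ^[k] (fun r : K ↦ r ^ N) (0 + 1) := by
        refine sum_congr rfl fun k _ ↦ ?_
        simp_rw [pow_succ' _ N, fwdDiff_iter_succ_mul_self_apply_zero, zero_add, zsmul_eq_mul]
        push_cast
        field_simp
    _ = 0 ^ N := by
        rw [sum_range_neg_one_pow_smul_fwdDiff_iter_add,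
          fwdDiff_iter_pow_eq_zero_of_lt N.lt_succ_self]
        simp

theorem bernoulli_eq_sum_fwdDiff_iter_pow (n : ℕ) :
    (bernoulli n : K) =
      ∑ k ∈ range (n + 1), (-1) ^ k / (k + 1) * Δ_[1] ^[k] (fun r : K ↦ r ^ n) 0 := by
  refine congr_fun (eq_of_sum_range_choose_mul_eq (s := fun n ↦ (bernoulli n : K))
    (t := fun n ↦
      ∑ k ∈ range (n + 1), (-1) ^ k / (k + 1) * Δ_[1] ^[k] (fun r : K ↦ r ^ n) 0)
    fun N ↦ ?_) n
  rw [sum_range_choose_mul_sum_fwdDiff_iter_pow]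
  exact_mod_cast (sum_bernoulli (N + 1)).trans (by simp [zero_pow_eq])

theorem Polynomial.aeval_bernoulli_eq_sum_fwdDiff_iter_pow (n : ℕ) (x : K) :
    aeval x (bernoulli n) =
      ∑ k ∈ range (n + 1), (-1) ^ k / (k + 1) * Δ_[1] ^[k] (fun r : K ↦ r ^ n) x := by
  simp_rw [fwdDiff_iter_pow_eq_sum_choose _ _ x, mul_sum]
  rw [sum_comm, bernoulli, map_sum]
  refine sum_congr rfl fun i hi ↦ ?_
  rw [aeval_monomial, map_mul, eq_ratCast, map_natCast, _root_.bernoulli_eq_sum_fwdDiff_iter_pow,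
    ← sum_range_mul_fwdDiff_iter_pow_of_lt _ (mem_range.1 hi), sum_mul, sum_mul]
  exact sum_congr rfl fun k _ ↦ by ring

end CharZeroField

theorem factorial_mul_ncWhitney {m : ℕ} (hm : m ≠ 0) (a : ℝ) {n k : ℕ} (hk : k ≤ n) :
    k ! * ncWhitney m a n k =
      (m : ℝ) ^ (n - k) * Δ_[1] ^[k] (fun r : ℝ ↦ r ^ n) (-a / m) := by
  have hm' : (m : ℝ) ≠ 0 := Nat.cast_ne_zero.2 hm
  have hdiff : (m : ℝ) ^ k * (k ! * ncWhitney m a n k) =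
      Δ_[(m : ℝ)] ^[k] (fun r ↦ r ^ n) (-a) := by
    rw [ncWhitney, fwdDiff_iter_eq_sum_shift]
    field_simp
    exact sum_congr rfl fun j _ ↦ by simp only [zsmul_eq_mul, nsmul_eq_mul]; push_cast; ring
  have hscale : Δ_[(m : ℝ)] ^[k] (fun r ↦ r ^ n) (-a) =
      (m : ℝ) ^ n * Δ_[1] ^[k] (fun r : ℝ ↦ r ^ n) (-a / m) := by
    rw [← mul_div_cancel₀ (-a) hm', fwdDiff_iter_apply_mul]
    simp_rw [mul_pow]
    rw [fwdDiff_iter_const_mul, mul_div_cancel_left₀ _ hm']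
  apply mul_left_cancel₀ (pow_ne_zero k hm')
  rw [hdiff, hscale, ← pow_sub_mul_pow _ hk]
  ring

/-- `B_n(-a/m) = Σ_{k=0}^{n} k! W̃_{m,a}(n,k) (-1)^k / (m^{n-k} (k+1))`. -/
theorem bernoulli_eq_sum_ncWhitney (m : ℕ) (hm : 0 < m) (a : ℝ) (n : ℕ) :
    Polynomial.aeval (-a / (m : ℝ)) (Polynomial.bernoulli n) =
      ∑ k ∈ Finset.range (n + 1),
        (Nat.factorial k : ℝ) * ncWhitney m a n k * (-1) ^ k /
          ((m : ℝ) ^ (n - k) * ((k : ℝ) + 1)) := by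
  rw [Polynomial.aeval_bernoulli_eq_sum_fwdDiff_iter_pow]
  refine sum_congr rfl fun k hk ↦ ?_
  rw [factorial_mul_ncWhitney hm.ne' a (Nat.lt_succ_iff.1 (mem_range.1 hk))]
  field_simp
end

section
/- For every natural number n and every real number x, the geometric polynomial is given by the Laplace-type integral w_n(x) = ∫_{0}^{∞} φ_n(x·λ) · e^{-λ} dλ. -/
open Finset MeasureTheory

/-- Stirling numbers of the second kind, via the standard recurrence. -/
def stirling2 : ℕ → ℕ → ℕ
  | 0, 0 => 1
  | 0, _ + 1 => 0
  | _ + 1, 0 => 0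
  | n + 1, k + 1 => stirling2 n k + (k + 1) * stirling2 n (k + 1)

/-- Geometric (Fubini) polynomials: `w_n(x) = Σ_{k=0}^{n} k! S(n,k) x^k`. -/
noncomputable def geomPoly (n : ℕ) (x : ℝ) : ℝ :=
  ∑ k ∈ Finset.range (n + 1), (Nat.factorial k : ℝ) * (stirling2 n k : ℝ) * x ^ k

/-- Exponential (Bell) polynomials: `φ_n(x) = Σ_{k=0}^{n} S(n,k) x^k`. -/
noncomputable def bellPoly (n : ℕ) (x : ℝ) : ℝ :=
  ∑ k ∈ Finset.range (n + 1), (stirling2 n k : ℝ) * x ^ k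

/-!
Since `∫₀^∞ λ^k e^{-λ} dλ = Γ(k+1) = k!`, integrating a polynomial `Σ a_k (xλ)^k` against
`e^{-λ}` multiplies its `k`-th coefficient by `k!`. Applied to `φ_n`, whose coefficients are
`S(n,k)`, this produces the coefficients `k! S(n,k)` of `w_n`.
-/

lemma integrableOn_pow_mul_exp_neg (k : ℕ) :
    IntegrableOn (fun l : ℝ => l ^ k * Real.exp (-l)) (Set.Ioi 0) := by
  refine (Real.GammaIntegral_convergent (s := (k + 1 : ℝ)) (by positivity)).congr_fun
    (fun l _ => ?_) measurableSet_Ioi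
  dsimp only
  rw [add_sub_cancel_right, Real.rpow_natCast, mul_comm]

lemma integral_pow_mul_exp_neg (k : ℕ) :
    ∫ l in Set.Ioi (0 : ℝ), l ^ k * Real.exp (-l) = k.factorial := by
  rw [← Real.Gamma_nat_eq_factorial, Real.Gamma_eq_integral (by positivity)]
  refine setIntegral_congr_fun measurableSet_Ioi fun l _ => ?_
  rw [add_sub_cancel_right, Real.rpow_natCast, mul_comm]

lemma integral_sum_mul_pow_mul_exp_neg (s : Finset ℕ) (a : ℕ → ℝ) (x : ℝ) :
    ∫ l in Set.Ioi (0 : ℝ), (∑ k ∈ s, a k * (x * l) ^ k) * Real.exp (-l) =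
      ∑ k ∈ s, k.factorial * a k * x ^ k := by
  have hsplit : ∀ l : ℝ, (∑ k ∈ s, a k * (x * l) ^ k) * Real.exp (-l) =
      ∑ k ∈ s, a k * x ^ k * (l ^ k * Real.exp (-l)) := fun l => by
    rw [sum_mul]
    exact sum_congr rfl fun k _ => by ring
  simp_rw [hsplit]
  rw [integral_finsetSum _ fun k _ => (integrableOn_pow_mul_exp_neg k).const_mul _]
  refine sum_congr rfl fun k _ => ?_
  rw [integral_const_mul, integral_pow_mul_exp_neg]
  ring

/-- `w_n(x) = ∫_0^∞ φ_n(x λ) e^{-λ} dλ`. -/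
theorem geomPoly_eq_integral_bellPoly (n : ℕ) (x : ℝ) :
    geomPoly n x = ∫ l in Set.Ioi (0 : ℝ), bellPoly n (x * l) * Real.exp (-l) := by
  simp only [bellPoly]
  rw [integral_sum_mul_pow_mul_exp_neg, geomPoly]
end
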